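/- Let P ∈ Dyck^m_{n1} (with prime decomposition P = P_1 ×_0 ... ×_0 P_s) and Q = Q_1 ×_0 ... ×_0 Q_r with all factors prime, and let λ ∈ Λ_r^i(P). If i > 0 then P *_λ Q = P_1 ×_0 ... ×_0 P_{s−1} ×_0 (P_s *_λ Q) with P_s *_λ Q prime; if i = 0 then λ = (λ_0,...,λ_{r−1},0) and P *_λ Q = P_1 ×_0 ... ×_0 P_{s−1} ×_0 (P_s *_λ (Q_1 ×_0 ... ×_0 Q_{j0})) ×_0 Q_{j0+1} ×_0 ... ×_0 Q_r, where j0 is the maximal index in {0,...,r−1} with λ_{j0} ≠ 0. -/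

import Mathlib

def stepVal (m : ℕ) (b : Bool) : ℤ := if b then (m : ℤ) else -1

def pathSum (m : ℕ) (P : List Bool) : ℤ := (P.map (stepVal m)).sum

def IsDyck (m : ℕ) (P : List Bool) : Prop :=
  pathSum m P = 0 ∧ ∀ Q : List Bool, Q <+: P → 0 ≤ pathSum m Q

def IsPrimePath (m : ℕ) (P : List Bool) : Prop :=
  P ≠ [] ∧ ¬ ∃ Q R : List Bool, Q ≠ [] ∧ R ≠ [] ∧ IsDyck m Q ∧ IsDyck m R ∧ P = Q ++ R

def Ltop (P : List Bool) : ℕ := (P.reverse.takeWhile (fun b => !b)).length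

def concatAt (P Q : List Bool) (j : ℕ) : List Bool :=
  P.take (P.length - j) ++ Q ++ List.replicate j false

def starLam (P : List Bool) : List (ℕ × List Bool) → List Bool
  | [] => P
  | (a, Q) :: rest => starLam (concatAt P Q (a + (rest.map Prod.fst).sum)) rest

def heightBefore (m : ℕ) (P : List Bool) (p : ℕ) : ℤ := pathSum m (P.take p)

def crossesAt (m : ℕ) (P : List Bool) (h : ℤ) (q : ℕ) : Prop :=
  if P.getD q true
    then heightBefore m P q ≤ h ∧ h < heightBefore m P q + m
    else h = heightBefore m P q - 1

noncomputable def colorOf (m : ℕ) (P : List Bool) (p : ℕ) : ℕ :=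
  (P.take (sSup {q | q < p ∧ crossesAt m P (heightBefore m P p - 1) q} + 1)).count true

noncomputable def topWord (m : ℕ) (P : List Bool) : List ℕ :=
  (List.range (Ltop P)).map (fun j => colorOf m P (P.length - Ltop P + j))

def suffixOK (m i : ℕ) (P : List Bool) (c : ℕ) : Prop :=
  (∀ x, ((topWord m P).drop ((topWord m P).length - c)).count x ≤ i)
  ∧ ∃ x, 1 ≤ x ∧ x ≤ P.count true
      ∧ ((topWord m P).drop ((topWord m P).length - c)).count x = i

def LambdaMem (m i : ℕ) (P : List Bool) (lam : List ℕ) (r : ℕ) : Prop :=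
  lam.length = r + 1 ∧ lam.sum = Ltop P ∧ suffixOK m i P (lam.getD r 0)

/-! The shifts `λ_1 + ⋯ + λ_r ≤ L(P) = L(P_s)` only reach into the final descent of the last
factor `P_s`, so `P_1, …, P_{s-1}` are never touched. Inserting a Dyck path into a prime path
at a point of positive height keeps it prime. If `i > 0` then `λ_r > 0`, so every insertion of
`P *_λ Q` happens at positive height. If `i = 0` then `λ_r = 0`, and the factors `Q_j` with
`j > j₀` are inserted with shift `0`, i.e. simply appended at the end. -/

lemma replicate_suffix_append_replicate {α : Type*} (l : List α) (x : α) {s k : ℕ}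
    (h : s ≤ k) : List.replicate s x <:+ l ++ List.replicate k x := by
  rw [← Nat.sub_add_cancel h, List.replicate_add, ← List.append_assoc]
  exact List.suffix_append _ _

lemma getLastD_mem_of_ne_nil {α : Type*} {L : List α} (h : L ≠ []) (d : α) : L.getLastD d ∈ L := by
  rw [List.getLastD_eq_getLast?, List.getLast?_eq_some_getLast h]
  exact List.getLast_mem h

lemma flatten_eq_flatten_dropLast_append {α : Type*} {L : List (List α)} (h : L ≠ []) :
    L.flatten = L.dropLast.flatten ++ L.getLastD [] := by
  conv_lhs => rw [← List.dropLast_append_getLast h]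
  simp [List.getLastD_eq_getLast?, List.getLast?_eq_some_getLast h]

lemma zip_eq_zip_take_append_zip_drop {α β : Type*} {l₁ : List α} {l₂ : List β}
    (h : l₁.length = l₂.length) (n : ℕ) :
    l₁.zip l₂ = (l₁.take n).zip (l₂.take n) ++ (l₁.drop n).zip (l₂.drop n) := by
  rw [← List.zip_append (by simp [h]), List.take_append_drop, List.take_append_drop]

lemma sum_drop_pos_of_getD_length_pos {a : ℕ} {t : List ℕ}
    (h : 0 < (a :: t).getD t.length 0) {n : ℕ} (hn : n < t.length) : 0 < (t.drop n).sum := by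
  obtain ⟨k, hk⟩ : ∃ k, t.length = k + 1 := ⟨t.length - 1, by omega⟩
  rw [hk, List.getD_cons_succ, List.getD_eq_getElem _ _ (by omega)] at h
  have hmem : t[k]'(by omega) ∈ t.drop n := by
    rw [List.mem_iff_getElem]
    exact ⟨k - n, by simp; omega, by simp; congr 1; omega⟩
  exact h.trans_le (List.le_sum_of_mem hmem)

lemma exists_getD_ne_zero_forall_gt_eq_zero {l : List ℕ} (h : l.sum ≠ 0) :
    ∃ j0 < l.length, l.getD j0 0 ≠ 0 ∧ ∀ j, j0 < j → l.getD j 0 = 0 := by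
  obtain ⟨x, hx, hx0⟩ := List.exists_mem_ne_zero_of_sum_ne_zero h
  obtain ⟨j, hj, rfl⟩ := List.mem_iff_getElem.mp hx
  have hjD : l.getD j 0 ≠ 0 := by rwa [List.getD_eq_getElem _ _ hj]
  have hspec := Nat.findGreatest_spec (P := fun j => l.getD j 0 ≠ 0) hj.le hjD
  refine ⟨_, ?_, hspec, fun j' hj' => ?_⟩
  · by_contra! hge
    exact hspec (List.getD_eq_default _ _ hge)
  rcases le_or_gt j' l.length with hle | hlt
  · exact not_not.mp (Nat.findGreatest_is_greatest hj' hle)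
  · exact List.getD_eq_default _ _ hlt.le

lemma sum_drop_eq_zero_of_forall_getD {l : List ℕ} {n : ℕ}
    (h : ∀ j, n ≤ j → l.getD j 0 = 0) : (l.drop n).sum = 0 := by
  refine List.sum_eq_zero fun x hx => ?_
  obtain ⟨t, ht, rfl⟩ := List.mem_iff_getElem.mp hx
  rw [List.getElem_drop, ← List.getD_eq_getElem _ 0]
  exact h _ (by omega)

lemma exists_last_getD_ne_zero_of_getD_length_eq_zero {a : ℕ} {t : List ℕ}
    (hsum : (a :: t).sum ≠ 0) (hlast : (a :: t).getD t.length 0 = 0) :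
    ∃ j0 < t.length, (a :: t).getD j0 0 ≠ 0 ∧ (∀ j, j0 < j → (a :: t).getD j 0 = 0)
      ∧ (t.drop j0).sum = 0 := by
  obtain ⟨j0, hj0len, hj0, hzero⟩ := exists_getD_ne_zero_forall_gt_eq_zero hsum
  refine ⟨j0, lt_of_le_of_ne (by simpa using hj0len) fun h => hj0 (h ▸ hlast), hj0, hzero, ?_⟩
  exact sum_drop_eq_zero_of_forall_getD (l := a :: t) (n := j0 + 1) hzero

@[simp]
lemma pathSum_nil (m : ℕ) : pathSum m [] = 0 := rfl

lemma pathSum_append (m : ℕ) (A B : List Bool) :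
    pathSum m (A ++ B) = pathSum m A + pathSum m B := by
  simp [pathSum]

lemma pathSum_replicate_false (m k : ℕ) :
    pathSum m (List.replicate k false) = -(k : ℤ) := by
  simp [pathSum, stepVal]

lemma pathSum_take_append (m n : ℕ) (A B : List Bool) :
    pathSum m ((A ++ B).take n) = pathSum m (A.take n) + pathSum m (B.take (n - A.length)) := by
  rw [List.take_append, pathSum_append]

lemma pathSum_take_replicate_false (m n k : ℕ) :
    pathSum m ((List.replicate k false).take n) = -(min n k : ℕ) := by
  rw [List.take_replicate, pathSum_replicate_false]

lemma isDyck_iff_take {m : ℕ} {P : List Bool} :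
    IsDyck m P ↔ pathSum m P = 0 ∧ ∀ n, 0 ≤ pathSum m (P.take n) := by
  refine and_congr_right fun _ => ⟨fun h n => h _ (P.take_prefix n), fun h Q hQ => ?_⟩
  rw [List.prefix_iff_eq_take.mp hQ]
  exact h Q.length

lemma IsDyck.pathSum_take_nonneg {m : ℕ} {P : List Bool} (h : IsDyck m P) (n : ℕ) :
    0 ≤ pathSum m (P.take n) :=
  (isDyck_iff_take.mp h).2 n

lemma IsDyck.true_mem {m : ℕ} {P : List Bool} (hD : IsDyck m P) (hne : P ≠ []) : true ∈ P := by
  by_contra h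
  have hP : P = List.replicate P.length false :=
    List.eq_replicate_iff.mpr ⟨rfl, fun b hb => by cases b <;> simp_all⟩
  have h0 := hD.1
  rw [hP, pathSum_replicate_false] at h0
  exact hne (List.eq_nil_of_length_eq_zero (by omega))

lemma isPrimePath_of_pathSum_take_ne_zero {m : ℕ} {P : List Bool} (hne : P ≠ [])
    (h : ∀ n, 0 < n → n < P.length → pathSum m (P.take n) ≠ 0) : IsPrimePath m P := by
  refine ⟨hne, ?_⟩
  rintro ⟨Q, R, hQ, hR, hQd, -, rfl⟩
  refine h Q.length (List.length_pos_iff.mpr hQ) ?_ ?_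
  · simp [List.length_pos_iff.mpr hR]
  · rw [List.take_left]
    exact hQd.1

/-- A Dyck path returning to height `0` at `n` splits as `P.take n ×₀ P.drop n`. -/
lemma IsPrimePath.pathSum_take_pos {m : ℕ} {P : List Bool} (hD : IsDyck m P)
    (hP : IsPrimePath m P) {n : ℕ} (h0 : 0 < n) (hn : n < P.length) :
    0 < pathSum m (P.take n) := by
  refine lt_of_le_of_ne (hD.pathSum_take_nonneg n) fun hzero => hP.2 ?_
  have hsplit := pathSum_append m (P.take n) (P.drop n)
  rw [List.take_append_drop, hD.1, ← hzero] at hsplit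
  refine ⟨P.take n, P.drop n, List.ne_nil_of_length_pos (by rw [List.length_take]; omega),
    List.ne_nil_of_length_pos (by rw [List.length_drop]; omega), ?_, ?_, (List.take_append_drop n P).symm⟩
  · refine isDyck_iff_take.mpr ⟨hzero.symm, fun j => ?_⟩
    rw [List.take_take]
    exact hD.pathSum_take_nonneg _
  · refine isDyck_iff_take.mpr ⟨by omega, fun j => ?_⟩
    have h := pathSum_append m (P.take n) ((P.drop n).take j)
    rw [← List.take_add, ← hzero] at h
    linarith [hD.pathSum_take_nonneg (n + j)]

lemma replicate_false_suffix_of_le_Ltop {P : List Bool} {k : ℕ} (hk : k ≤ Ltop P) :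
    List.replicate k false <:+ P := by
  have htop : P.reverse.takeWhile (fun b => !b) = List.replicate (Ltop P) false :=
    List.eq_replicate_iff.mpr ⟨rfl, fun b hb => by simpa using List.mem_takeWhile_imp hb⟩
  have hsuf : List.replicate (Ltop P) false <:+ P := by
    rw [← List.reverse_prefix, List.reverse_replicate, ← htop]
    exact List.takeWhile_prefix _
  refine List.IsSuffix.trans ?_ hsuf
  rw [← Nat.sub_add_cancel hk, List.replicate_add]
  exact List.suffix_append _ _

lemma Ltop_append {A B : List Bool} (hB : true ∈ B) : Ltop (A ++ B) = Ltop B := by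
  unfold Ltop
  rw [List.reverse_append, List.takeWhile_append, if_neg]
  intro hlen
  have hall := List.takeWhile_eq_self_iff.mp ((List.takeWhile_prefix _).eq_of_length hlen)
  simpa using hall true (by simpa using hB)

/-- A nonempty Dyck path ends with a down step, since an up step raises the height by `m ≥ 1`. -/
lemma Ltop_pos {m : ℕ} (hm : 1 ≤ m) {P : List Bool} (hD : IsDyck m P) (hne : P ≠ []) :
    0 < Ltop P := by
  obtain ⟨Y, b, rfl⟩ := (List.eq_nil_or_concat P).resolve_left hne
  cases b
  · simp [Ltop]
  · have hY : 0 ≤ pathSum m Y := hD.2 Y ⟨[true], by simp⟩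
    have h0 := hD.1
    have hup : pathSum m [true] = m := by simp [pathSum, stepVal]
    rw [List.concat_eq_append, pathSum_append, hup] at h0
    omega

lemma concatAt_append_replicate (A Q : List Bool) (k : ℕ) :
    concatAt (A ++ List.replicate k false) Q k = A ++ Q ++ List.replicate k false := by
  simp [concatAt]

lemma pathSum_take_insert (m n k : ℕ) (A Q : List Bool) :
    pathSum m ((A ++ Q ++ List.replicate k false).take n)
      = pathSum m (A.take n) + pathSum m (Q.take (n - A.length))
        - (min (n - A.length - Q.length) k : ℕ) := by
  rw [List.append_assoc, pathSum_take_append, pathSum_take_append, pathSum_take_replicate_false,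
    Nat.sub_sub]
  ring

section Insert

variable {m k : ℕ} {A Q : List Bool}

lemma pathSum_eq_of_isDyck_append_replicate (hT : IsDyck m (A ++ List.replicate k false)) :
    pathSum m A = k := by
  have h := hT.1
  rw [pathSum_append, pathSum_replicate_false] at h
  omega

lemma pathSum_take_eq_of_le_length {n : ℕ} (hn : n ≤ A.length) :
    pathSum m (A.take n) = pathSum m ((A ++ List.replicate k false).take n) := by
  rw [List.take_append_of_le_length hn]

lemma isDyck_insert (hT : IsDyck m (A ++ List.replicate k false)) (hQ : IsDyck m Q) :
    IsDyck m (A ++ Q ++ List.replicate k false) := by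
  have hA := pathSum_eq_of_isDyck_append_replicate hT
  refine isDyck_iff_take.mpr ⟨?_, fun n => ?_⟩
  · rw [pathSum_append, pathSum_append, hA, hQ.1, pathSum_replicate_false]
    ring
  rw [pathSum_take_insert]
  have hQn := hQ.pathSum_take_nonneg (n - A.length)
  rcases le_or_gt n A.length with hn | hn
  · rw [pathSum_take_eq_of_le_length (k := k) hn]
    have := hT.pathSum_take_nonneg n
    simp only [show n - A.length = 0 by omega, List.take_zero, pathSum_nil, Nat.zero_sub,
      Nat.zero_min]
    omega
  · rw [List.take_of_length_le hn.le, hA]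
    have : min (n - A.length - Q.length) k ≤ k := min_le_right _ _
    omega

/-- `Q` is inserted at height `k > 0`, so no proper prefix of the result returns to height `0`. -/
lemma isPrimePath_insert (hT : IsDyck m (A ++ List.replicate k false))
    (hTp : IsPrimePath m (A ++ List.replicate k false)) (hQ : IsDyck m Q) (hk : 0 < k) :
    IsPrimePath m (A ++ Q ++ List.replicate k false) := by
  have hA := pathSum_eq_of_isDyck_append_replicate hT
  refine isPrimePath_of_pathSum_take_ne_zero (by simp; omega) fun n h0 hn => ?_
  simp only [List.length_append, List.length_replicate] at hn
  rw [pathSum_take_insert]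
  rcases le_or_gt n A.length with hnA | hnA
  · rw [pathSum_take_eq_of_le_length (k := k) hnA]
    have := hTp.pathSum_take_pos hT h0 (by simp; omega)
    simp only [show n - A.length = 0 by omega, List.take_zero, pathSum_nil, Nat.zero_sub,
      Nat.zero_min]
    omega
  · rw [List.take_of_length_le hnA.le, hA]
    have := hQ.pathSum_take_nonneg (n - A.length)
    have : min (n - A.length - Q.length) k < k := min_lt_iff.mpr (Or.inl (by omega))
    omega

end Insert

lemma starLam_append_left (A : List Bool) :
    ∀ (L : List (ℕ × List Bool)) (B : List Bool),
      List.replicate (L.map Prod.fst).sum false <:+ B →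
      starLam (A ++ B) L = A ++ starLam B L
  | [], _, _ => rfl
  | (a, Q) :: rest, _, h => by
    obtain ⟨B, rfl⟩ := h
    simp only [List.map_cons, List.sum_cons] at *
    rw [starLam, starLam, ← List.append_assoc, concatAt_append_replicate,
      concatAt_append_replicate, List.append_assoc A, List.append_assoc A]
    exact starLam_append_left A rest _ (replicate_suffix_append_replicate _ _ (by omega))

lemma starLam_of_sum_fst_eq_zero :
    ∀ (L : List (ℕ × List Bool)) (T : List Bool),
      (L.map Prod.fst).sum = 0 → starLam T L = T ++ (L.map Prod.snd).flatten
  | [], T, _ => by simp [starLam]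
  | (a, Q) :: rest, T, h => by
    simp only [List.map_cons, List.sum_cons] at h
    rw [starLam, starLam_of_sum_fst_eq_zero rest _ (by omega), show a + _ = 0 by omega]
    simp [concatAt]

lemma starLam_append_of_sum_fst_eq_zero (L₂ : List (ℕ × List Bool))
    (h : (L₂.map Prod.fst).sum = 0) :
    ∀ (L₁ : List (ℕ × List Bool)) (T : List Bool),
      starLam T (L₁ ++ L₂) = starLam T L₁ ++ (L₂.map Prod.snd).flatten
  | [], T => starLam_of_sum_fst_eq_zero L₂ T h
  | (a, Q) :: rest, T => by
    rw [List.cons_append, starLam, starLam, List.map_append, List.sum_append, h, add_zero]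
    exact starLam_append_of_sum_fst_eq_zero L₂ h rest _

lemma starLam_isDyck_isPrimePath {m : ℕ} :
    ∀ (L : List (ℕ × List Bool)) (T : List Bool),
      IsDyck m T → IsPrimePath m T → (∀ p ∈ L, IsDyck m p.2) →
      List.replicate (L.map Prod.fst).sum false <:+ T →
      (∀ n < L.length, 0 < ((L.map Prod.fst).drop n).sum) →
      IsDyck m (starLam T L) ∧ IsPrimePath m (starLam T L)
  | [], _, hT, hTp, _, _, _ => ⟨hT, hTp⟩
  | (a, Q) :: rest, _, hT, hTp, hQ, ⟨A, hA⟩, hpos => by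
    subst hA
    have hk : 0 < a + (rest.map Prod.fst).sum := by simpa using hpos 0 (by simp)
    have hQd : IsDyck m Q := hQ _ List.mem_cons_self
    simp only [List.map_cons, List.sum_cons] at hT hTp ⊢
    rw [starLam, concatAt_append_replicate]
    exact starLam_isDyck_isPrimePath rest _ (isDyck_insert hT hQd)
      (isPrimePath_insert hT hTp hQd hk) (fun p hp => hQ p (List.mem_cons_of_mem _ hp))
      (replicate_suffix_append_replicate _ _ (by omega))
      (fun n hn => by simpa using hpos (n + 1) (by simpa using hn))

lemma length_topWord (m : ℕ) (P : List Bool) : (topWord m P).length = Ltop P := by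
  simp [topWord]

lemma suffixOK.pos {m i : ℕ} {P : List Bool} {c : ℕ} (h : suffixOK m i P c) (hi : 0 < i) :
    0 < c := by
  obtain ⟨x, -, -, hx⟩ := h.2
  have hpos : 0 < ((topWord m P).drop ((topWord m P).length - c)).length :=
    List.length_pos_iff.mpr fun hnil => by rw [hnil, List.count_nil] at hx; omega
  rw [List.length_drop] at hpos
  omega

lemma suffixOK.eq_zero {m : ℕ} {P : List Bool} {c : ℕ} (h : suffixOK m 0 P c)
    (hP : 0 < Ltop P) : c = 0 := by
  have hnil : (topWord m P).drop ((topWord m P).length - c) = [] :=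
    List.eq_nil_iff_forall_not_mem.mpr fun x hx => by
      have := h.1 x
      rw [Nat.le_zero, List.count_eq_zero] at this
      exact this hx
  have := congrArg List.length hnil
  rw [List.length_drop, length_topWord, List.length_nil] at this
  omega

theorem starLam_prime_factorization_general (m : ℕ) (hm : 1 ≤ m) (i : ℕ)
    (Ps Qs : List (List Bool)) (hPne : Ps ≠ [])
    (hPs : ∀ R ∈ Ps, IsDyck m R ∧ IsPrimePath m R)
    (hQs : ∀ Q ∈ Qs, IsDyck m Q ∧ IsPrimePath m Q)
    (lam : List ℕ) (hlam : LambdaMem m i Ps.flatten lam Qs.length) :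
    (0 < i →
      starLam Ps.flatten (lam.tail.zip Qs)
          = Ps.dropLast.flatten ++ starLam (Ps.getLastD []) (lam.tail.zip Qs)
        ∧ IsPrimePath m (starLam (Ps.getLastD []) (lam.tail.zip Qs)))
    ∧ (i = 0 →
      lam.getD Qs.length 0 = 0 ∧
      ∃ j0 : ℕ, j0 < Qs.length ∧ lam.getD j0 0 ≠ 0
        ∧ (∀ j, j0 < j → j < Qs.length → lam.getD j 0 = 0)
        ∧ starLam Ps.flatten (lam.tail.zip Qs)
            = Ps.dropLast.flatten
              ++ starLam (Ps.getLastD []) ((lam.tail.take j0).zip (Qs.take j0))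
              ++ (Qs.drop j0).flatten) := by
  obtain ⟨hlen, hsum, hOK⟩ := hlam
  obtain ⟨a, t, rfl⟩ : ∃ a t, lam = a :: t := List.exists_cons_of_length_eq_add_one hlen
  have ht : t.length = Qs.length := by simpa using hlen
  rw [List.tail_cons]
  set P := Ps.getLastD []
  obtain ⟨hPD, hPP⟩ := hPs P (getLastD_mem_of_ne_nil hPne [])
  have hflat : Ps.flatten = Ps.dropLast.flatten ++ P := flatten_eq_flatten_dropLast_append hPne
  have hLtop : Ltop Ps.flatten = Ltop P := by rw [hflat]; exact Ltop_append (hPD.true_mem hPP.1)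
  have hfst : (t.zip Qs).map Prod.fst = t := List.map_fst_zip ht.le
  have hsuf : List.replicate ((t.zip Qs).map Prod.fst).sum false <:+ P := by
    rw [hfst]
    exact replicate_false_suffix_of_le_Ltop (by rw [List.sum_cons] at hsum; omega)
  have hstar : starLam Ps.flatten (t.zip Qs) = Ps.dropLast.flatten ++ starLam P (t.zip Qs) := by
    rw [hflat]; exact starLam_append_left _ _ _ hsuf
  refine ⟨fun hi => ⟨hstar, ?_⟩, fun hi => ?_⟩
  · refine (starLam_isDyck_isPrimePath _ _ hPD hPP (fun p hp => (hQs _ (List.of_mem_zip hp).2).1)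
      hsuf fun n hn => ?_).2
    rw [hfst]
    exact sum_drop_pos_of_getD_length_pos (ht ▸ hOK.pos hi) (by simp at hn; omega)
  subst hi
  have hLpos : 0 < Ltop Ps.flatten := hLtop ▸ Ltop_pos hm hPD hPP.1
  have hlast : (a :: t).getD t.length 0 = 0 := ht ▸ hOK.eq_zero hLpos
  obtain ⟨j0, hj0lt, hj0, hzero, htail⟩ :=
    exists_last_getD_ne_zero_of_getD_length_eq_zero (by omega) hlast
  rw [← List.map_fst_zip (l₁ := t.drop j0) (l₂ := Qs.drop j0) (by simp [ht])] at htail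
  refine ⟨ht ▸ hlast, j0, ht ▸ hj0lt, hj0, fun j hj _ => hzero j hj, ?_⟩
  rw [hstar, zip_eq_zip_take_append_zip_drop ht j0, starLam_append_of_sum_fst_eq_zero _ htail,
    List.map_snd_zip (by simp [ht]), List.append_assoc]

/-- With `P = P_1 ×₀ … ×₀ P_s` and `Q = Q_1 ×₀ … ×₀ Q_r` (all factors prime)
and `λ ∈ Λ_r^i(P)`: if `i > 0` then
`P *_λ Q = P_1 ×₀ … ×₀ P_{s−1} ×₀ (P_s *_λ Q)` with `P_s *_λ Q` prime; if
`i = 0` then `λ_r = 0` and `P *_λ Q = P_1 ×₀ … ×₀ P_{s−1} ×₀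
(P_s *_λ (Q_1 ×₀ … ×₀ Q_{j₀})) ×₀ Q_{j₀+1} ×₀ … ×₀ Q_r`, where `j₀` is the
maximal index in `{0,…,r−1}` with `λ_{j₀} ≠ 0`. -/
theorem starLam_prime_factorization (m : ℕ) (hm : 1 ≤ m) (i : ℕ) (hi : i ≤ m)
    (Ps Qs : List (List Bool)) (hPne : Ps ≠ []) (hQne : Qs ≠ [])
    (hPs : ∀ R ∈ Ps, IsDyck m R ∧ IsPrimePath m R)
    (hQs : ∀ Q ∈ Qs, IsDyck m Q ∧ IsPrimePath m Q)
    (lam : List ℕ) (hlam : LambdaMem m i Ps.flatten lam Qs.length) :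
    (0 < i →
      starLam Ps.flatten (lam.tail.zip Qs)
          = Ps.dropLast.flatten ++ starLam (Ps.getLastD []) (lam.tail.zip Qs)
        ∧ IsPrimePath m (starLam (Ps.getLastD []) (lam.tail.zip Qs)))
    ∧ (i = 0 →
      lam.getD Qs.length 0 = 0 ∧
      ∃ j0 : ℕ, j0 < Qs.length ∧ lam.getD j0 0 ≠ 0
        ∧ (∀ j, j0 < j → j < Qs.length → lam.getD j 0 = 0)
        ∧ starLam Ps.flatten (lam.tail.zip Qs)
            = Ps.dropLast.flatten
              ++ starLam (Ps.getLastD []) ((lam.tail.take j0).zip (Qs.take j0))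
              ++ (Qs.drop j0).flatten) :=
  starLam_prime_factorization_general m hm i Ps Qs hPne hPs hQs lam hlam
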